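/- In the KV protocol, conditioned on key i being selected in the filtering step, the frequency estimate is unbiased with the stated variance: E[Φ̂_i] = Φ_i and Var[Φ̂_i] = Φ_i·(κ−β)/(nβ) + 2κ²σ₂²/(n²β²), where Φ̂_i = (κ/(nβ))·(X + z₁ + z₂ − 2μ₂). -/

import Mathlib

open MeasureTheory ProbabilityTheory

/-!
`Φ̂_i` is an affine function of `W = X + z₁ + z₂`, whose three summands are independent, so
`E[W] = mβ/κ + 2μ₂` and `Var[W] = m·(β/κ)(1 - β/κ) + 2σ₂²`, the first term being the variance
of a sum of `m` independent Bernoulli(β/κ) indicators. Multiplying by `κ/(nβ)` and shifting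
by a constant gives the mean `m/n` and scales the variance by `κ²/(n²β²)`.
-/

namespace ProbabilityTheory

variable {Ω : Type*} [MeasurableSpace Ω] {P : Measure Ω}

lemma iIndepFun.variance_sum {ι : Type*} [Fintype ι] {X : ι → Ω → ℝ} (hX : iIndepFun X P)
    (hL2 : ∀ i, MemLp (X i) 2 P) : Var[∑ i, X i; P] = ∑ i, Var[X i; P] :=
  IndepFun.variance_sum (fun i _ => hL2 i) fun _ _ _ _ hij => hX.indepFun hij

lemma iIndepFun.variance_add_add {f g h : Ω → ℝ} (hind : iIndepFun ![f, g, h] P)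
    (hf : MemLp f 2 P) (hg : MemLp g 2 P) (hh : MemLp h 2 P) :
    Var[f + g + h; P] = Var[f; P] + Var[g; P] + Var[h; P] := by
  have hL2 : ∀ i, MemLp (![f, g, h] i) 2 P := by
    intro i
    fin_cases i <;> assumption
  simpa [Fin.sum_univ_three] using hind.variance_sum hL2

variable {f : Ω → ℝ}

lemma memLp_of_forall_eq_zero_or_one [IsFiniteMeasure P] (hf : AEStronglyMeasurable f P)
    (h01 : ∀ ω, f ω = 0 ∨ f ω = 1) (p : ENNReal) : MemLp f p P :=
  memLp_of_bounded (a := 0) (b := 1)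
    (ae_of_all _ fun ω => by rcases h01 ω with h | h <;> simp [h]) hf p

lemma variance_of_forall_eq_zero_or_one [IsProbabilityMeasure P]
    (hf : AEStronglyMeasurable f P) (h01 : ∀ ω, f ω = 0 ∨ f ω = 1) :
    Var[f; P] = P[f] * (1 - P[f]) := by
  have hsq : f ^ 2 = f := by
    funext ω
    rcases h01 ω with h | h <;> simp [h]
  rw [variance_eq_sub (memLp_of_forall_eq_zero_or_one hf h01 2), hsq]
  ring

lemma integral_const_mul_sub_const [IsProbabilityMeasure P] (hf : Integrable f P) (a b : ℝ) :
    P[fun ω => a * f ω - b] = a * P[f] - b := by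
  simp [integral_sub (hf.const_mul a) (integrable_const b), integral_const_mul]

lemma variance_sum_of_iIndepFun_of_forall_eq_zero_or_one [IsProbabilityMeasure P] {ι : Type*}
    [Fintype ι] {X : ι → Ω → ℝ} {p : ℝ} (hind : iIndepFun X P)
    (hX : ∀ i, AEStronglyMeasurable (X i) P) (h01 : ∀ i ω, X i ω = 0 ∨ X i ω = 1)
    (hmean : ∀ i, P[X i] = p) :
    Var[fun ω => ∑ i, X i ω; P] = Fintype.card ι * (p * (1 - p)) := by
  rw [← Finset.sum_fn, hind.variance_sum fun i => memLp_of_forall_eq_zero_or_one (hX i) (h01 i) 2]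
  simp [variance_of_forall_eq_zero_or_one (hX _) (h01 _), hmean]

end ProbabilityTheory

theorem kv_frequency_estimator_unbiased_and_variance_general
    {Ω : Type*} [MeasurableSpace Ω] (P : Measure Ω) [IsProbabilityMeasure P]
    -- n users in total, m = n·Φ_i of whom hold key i; padding length κ
    (n m κ : ℕ) (hκ : 1 ≤ κ)
    (β : ℝ) (hβ0 : 0 < β)
    (μ2 σ2 : ℝ)
    -- i.i.d. Bernoulli(β/κ) survival indicators
    (X : Fin m → Ω → ℝ)
    (hXmeas : ∀ j, Measurable (X j))
    (hX01 : ∀ j ω, X j ω = 0 ∨ X j ω = 1)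
    (hXmean : ∀ j, ∫ ω, X j ω ∂P = β / κ)
    (hXiid : iIndepFun X P)
    -- nonnegative-integer-valued dummy counts, each with mean μ₂ and variance σ₂²
    (z1 z2 : Ω → ℝ)
    (hz1L2 : MemLp z1 2 P) (hz2L2 : MemLp z2 2 P)
    (hz1mean : ∫ ω, z1 ω ∂P = μ2) (hz2mean : ∫ ω, z2 ω ∂P = μ2)
    (hz1var : variance z1 P = σ2) (hz2var : variance z2 P = σ2)
    -- X, z₁, z₂ mutually independent
    (hmut : iIndepFun
      ![fun ω => ∑ j, X j ω, z1, z2] P)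
    -- frequency estimate: Φ̂_i = (κ/(nβ))·(X + z₁ + z₂ − 2μ₂)
    (Phat : Ω → ℝ)
    (hPhat : ∀ ω, Phat ω
      = ((κ : ℝ) / (n * β)) * ((∑ j, X j ω) + z1 ω + z2 ω - 2 * μ2)) :
    (∫ ω, Phat ω ∂P = (m : ℝ) / n) ∧
      variance Phat P
        = ((m : ℝ) / n) * ((κ : ℝ) - β) / (n * β)
            + 2 * (κ : ℝ)^2 * σ2 / ((n : ℝ)^2 * β^2) := by
  set S : Ω → ℝ := fun ω => ∑ j, X j ω
  have hκ0 : (κ : ℝ) ≠ 0 := by positivity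
  have hXL2 : ∀ j, MemLp (X j) 2 P := fun j =>
    memLp_of_forall_eq_zero_or_one (hXmeas j).aestronglyMeasurable (hX01 j) 2
  have hSL2 : MemLp S 2 P := memLp_finsetSum _ fun j _ => hXL2 j
  have hS_mean : P[S] = m * (β / κ) := by
    simp [S, integral_finsetSum _ fun j _ => (hXL2 j).integrable one_le_two, hXmean]
  have hS_var : Var[S; P] = m * (β / κ * (1 - β / κ)) := by
    simpa using variance_sum_of_iIndepFun_of_forall_eq_zero_or_one hXiid
      (fun j => (hXmeas j).aestronglyMeasurable) hX01 hXmean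
  have hW_mean : P[S + z1 + z2] = m * (β / κ) + μ2 + μ2 := by
    rw [integral_add' ((hSL2.add hz1L2).integrable one_le_two) (hz2L2.integrable one_le_two),
      integral_add' (hSL2.integrable one_le_two) (hz1L2.integrable one_le_two),
      hS_mean, hz1mean, hz2mean]
  have hW_var : Var[S + z1 + z2; P] = m * (β / κ * (1 - β / κ)) + σ2 + σ2 := by
    rw [hmut.variance_add_add hSL2 hz1L2 hz2L2, hS_var, hz1var, hz2var]
  have hPhat_affine :
      Phat = fun ω => κ / (n * β) * (S + z1 + z2) ω - κ / (n * β) * (2 * μ2) := by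
    funext ω
    simp only [hPhat ω, Pi.add_apply, S]
    ring
  have hWL2 : MemLp (S + z1 + z2) 2 P := (hSL2.add hz1L2).add hz2L2
  constructor
  · rw [hPhat_affine, integral_const_mul_sub_const (hWL2.integrable one_le_two), hW_mean]
    field_simp
    ring
  · rw [hPhat_affine, variance_sub_const (hWL2.const_mul _).1, variance_const_mul, hW_var]
    field_simp
    ring

/-- In the KV protocol, conditioned on key `i` being selected in the
filtering step, the frequency estimate is unbiased with the stated variance:
`E[Φ̂ i] = Φ i` and `Var[Φ̂ i] = Φ_i·(κ−β)/(nβ) + 2κ²σ₂²/(n²β²)`, where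
`Φ̂ i = (κ/(nβ))·(X + z₁ + z₂ − 2μ₂)`, `X = Σ_{j=1}^m X_j` and `Φ_i = m/n`. -/
theorem kv_frequency_estimator_unbiased_and_variance
    {Ω : Type*} [MeasurableSpace Ω] (P : Measure Ω) [IsProbabilityMeasure P]
    -- n users in total, m = n·Φ_i of whom hold key i; padding length κ
    (n m κ : ℕ) (hn : 1 ≤ n) (hmn : m ≤ n) (hκ : 1 ≤ κ)
    (β : ℝ) (hβ0 : 0 < β) (hβ1 : β ≤ 1)
    (μ2 σ2 : ℝ)
    -- i.i.d. Bernoulli(β/κ) survival indicators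
    (X : Fin m → Ω → ℝ)
    (hXmeas : ∀ j, Measurable (X j))
    (hX01 : ∀ j ω, X j ω = 0 ∨ X j ω = 1)
    (hXmean : ∀ j, ∫ ω, X j ω ∂P = β / κ)
    (hXiid : iIndepFun X P)
    (hXident : ∀ j j', IdentDistrib (X j) (X j') P P)
    -- nonnegative-integer-valued dummy counts, each with mean μ₂ and variance σ₂²
    (z1 z2 : Ω → ℝ)
    (hz1meas : Measurable z1) (hz2meas : Measurable z2)
    (hz1Nat : ∀ ω, ∃ k : ℕ, z1 ω = k) (hz2Nat : ∀ ω, ∃ k : ℕ, z2 ω = k)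
    (hz1L2 : MemLp z1 2 P) (hz2L2 : MemLp z2 2 P)
    (hz1mean : ∫ ω, z1 ω ∂P = μ2) (hz2mean : ∫ ω, z2 ω ∂P = μ2)
    (hz1var : variance z1 P = σ2) (hz2var : variance z2 P = σ2)
    -- X, z₁, z₂ mutually independent
    (hmut : iIndepFun
      ![fun ω => ∑ j, X j ω, z1, z2] P)
    -- frequency estimate: Φ̂_i = (κ/(nβ))·(X + z₁ + z₂ − 2μ₂)
    (Phat : Ω → ℝ)
    (hPhat : ∀ ω, Phat ω
      = ((κ : ℝ) / (n * β)) * ((∑ j, X j ω) + z1 ω + z2 ω - 2 * μ2)) :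
    (∫ ω, Phat ω ∂P = (m : ℝ) / n) ∧
      variance Phat P
        = ((m : ℝ) / n) * ((κ : ℝ) - β) / (n * β)
            + 2 * (κ : ℝ)^2 * σ2 / ((n : ℝ)^2 * β^2) :=
  kv_frequency_estimator_unbiased_and_variance_general P n m κ hκ β hβ0 μ2 σ2 X hXmeas hX01 hXmean
    hXiid z1 z2 hz1L2 hz2L2 hz1mean hz2mean hz1var hz2var hmut Phat hPhat
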